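/- Let γ ∈ (1,2). Then the WSGD weights are absolutely summable, and their absolute sum equals ∑_{k=0}^∞ |w_k^{(γ)}| = γ² + γ - 2 + (γ/4)·( |γ²+γ-4| - (γ²+γ-4) ). In particular the function f_γ(ξ) = -∑_{k=-1}^∞ w_{k+1}^{(γ)} e^{i k ξ} is well defined (the series converges absolutely and uniformly in ξ), i.e. f_γ belongs to the Wiener class. -/

import Mathlib

open scoped Real Topology

/-- Alternating fractional binomial coefficients. -/
noncomputable def gcoef (γ : ℝ) (k : ℕ) : ℝ :=
  (-1 : ℝ) ^ k / (Nat.factorial k) * ∏ i ∈ Finset.range k, (γ - i)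

/-- WSGD weights. -/
noncomputable def w (γ : ℝ) : ℕ → ℝ
  | 0 => γ / 2 * gcoef γ 0
  | (k + 1) => γ / 2 * gcoef γ (k + 1) + (2 - γ) / 2 * gcoef γ k

/-!
For `1 < γ < 2` the coefficients `g_k = (-1)^k (γ choose k)` satisfy `g_0 = 1`, `g_1 = -γ` and
`g_k ≥ 0` for `k ≥ 2`, and their partial sums are `∑_{k ≤ n} g_k(γ) = g_n(γ - 1) = O(1/n)`, so
`∑ g_k = 0` and hence `∑ w_k = 0`. Since `w_k ≥ 0` for `k ≥ 3`, the absolute sum is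
`∑ w_k + ∑_{k < 3} (|w_k| - w_k) = -2 w_1 + |w_2| - w_2`, which is the stated value.
-/

open Filter Finset

theorem hasSum_of_tendsto_sum_range_of_nonneg_from {f : ℕ → ℝ} {a : ℝ} {n : ℕ}
    (hf : ∀ k, n ≤ k → 0 ≤ f k) (h : Tendsto (fun m ↦ ∑ i ∈ range m, f i) atTop (𝓝 a)) :
    HasSum f a := by
  rw [← hasSum_nat_add_iff' n, hasSum_iff_tendsto_nat_of_nonneg (fun k ↦ hf _ (by omega))]
  refine ((h.comp (tendsto_add_atTop_nat n)).sub_const _).congr fun m ↦ ?_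
  rw [Function.comp_apply, add_comm m n, sum_range_add_sub_sum_range]
  simp only [add_comm n]

theorem HasSum.abs_of_nonneg_from {f : ℕ → ℝ} {a : ℝ} (hf : HasSum f a) (n : ℕ)
    (hnonneg : ∀ k, n ≤ k → 0 ≤ f k) :
    HasSum (fun k ↦ |f k|) (a + ∑ i ∈ range n, (|f i| - f i)) := by
  rw [← hasSum_nat_add_iff' n]
  convert (hasSum_nat_add_iff' n).mpr hf using 1
  · exact funext fun k ↦ abs_of_nonneg (hnonneg _ (by omega))
  · rw [sum_sub_distrib]; ring

section gcoef

variable (γ : ℝ) (k : ℕ)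

@[simp] theorem gcoef_zero : gcoef γ 0 = 1 := by simp [gcoef]

@[simp] theorem gcoef_one : gcoef γ 1 = -γ := by simp [gcoef]

theorem gcoef_two : gcoef γ 2 = γ * (γ - 1) / 2 := by
  simp [gcoef, prod_range_succ]; ring

theorem gcoef_succ : gcoef γ (k + 1) = gcoef γ k * (k - γ) / (k + 1) := by
  simp only [gcoef, prod_range_succ, Nat.factorial_succ, pow_succ, Nat.cast_mul, Nat.cast_add,
    Nat.cast_one]
  field_simp
  ring

theorem gcoef_succ_eq_mul_gcoef_sub_one : gcoef γ (k + 1) = -γ / (k + 1) * gcoef (γ - 1) k := by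
  have hprod : ∏ i ∈ range (k + 1), (γ - i) = γ * ∏ i ∈ range k, (γ - 1 - i) := by
    rw [prod_range_succ', mul_comm]
    push_cast
    simp only [sub_zero, sub_add_eq_sub_sub_swap]
  simp only [gcoef, hprod, Nat.factorial_succ, pow_succ, Nat.cast_mul, Nat.cast_add, Nat.cast_one]
  field_simp

/-- Pascal's rule `(γ choose k+1) = (γ-1 choose k+1) + (γ-1 choose k)`, telescoped. -/
theorem sum_range_succ_gcoef : ∑ i ∈ range (k + 1), gcoef γ i = gcoef (γ - 1) k := by
  induction k with
  | zero => simp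
  | succ k ih =>
    rw [sum_range_succ, ih, gcoef_succ_eq_mul_gcoef_sub_one, gcoef_succ]
    field_simp
    ring

variable {γ}

theorem abs_gcoef_le_one (h₁ : -1 ≤ γ) (h₂ : γ ≤ 1) : |gcoef γ k| ≤ 1 := by
  induction k with
  | zero => simp
  | succ k ih =>
    have hfactor : |((k : ℝ) - γ) / (k + 1)| ≤ 1 := by
      rw [abs_div, abs_of_pos (by positivity : (0 : ℝ) < k + 1), div_le_one (by positivity),
        abs_le]
      constructor <;> linarith [(Nat.cast_nonneg k : (0 : ℝ) ≤ k)]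
    rw [gcoef_succ, mul_div_assoc, abs_mul]
    exact mul_le_one₀ ih (abs_nonneg _) hfactor

theorem tendsto_gcoef_atTop (h₀ : 0 ≤ γ) (h₂ : γ ≤ 2) : Tendsto (gcoef γ) atTop (𝓝 0) := by
  rw [← tendsto_add_atTop_iff_nat 1]
  refine squeeze_zero_norm (a := fun n : ℕ ↦ γ / ((n : ℝ) + 1)) (fun n ↦ ?_) ?_
  · rw [gcoef_succ_eq_mul_gcoef_sub_one, norm_mul, neg_div, norm_neg, Real.norm_eq_abs,
      Real.norm_eq_abs, abs_of_nonneg (by positivity)]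
    exact mul_le_of_le_one_right (by positivity) (abs_gcoef_le_one n (by linarith) (by linarith))
  · simpa [div_eq_mul_one_div γ] using tendsto_one_div_add_atTop_nhds_zero_nat.const_mul γ

theorem gcoef_nonneg (h₁ : 1 ≤ γ) (h₂ : γ ≤ 2) {k : ℕ} (hk : 2 ≤ k) : 0 ≤ gcoef γ k := by
  induction k, hk using Nat.le_induction with
  | base => rw [gcoef_two]; nlinarith
  | succ k hk ih =>
    have : (2 : ℝ) ≤ k := by exact_mod_cast hk
    rw [gcoef_succ]
    exact div_nonneg (mul_nonneg ih (by linarith)) (by positivity)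

theorem hasSum_gcoef (h₁ : 1 ≤ γ) (h₂ : γ ≤ 2) : HasSum (gcoef γ) 0 := by
  refine hasSum_of_tendsto_sum_range_of_nonneg_from (fun k hk ↦ gcoef_nonneg h₁ h₂ hk) ?_
  rw [← tendsto_add_atTop_iff_nat 1]
  simp only [sum_range_succ_gcoef]
  exact tendsto_gcoef_atTop (by linarith) (by linarith)

end gcoef

section w

variable (γ : ℝ)

@[simp] theorem w_zero : w γ 0 = γ / 2 := by simp [w]

@[simp] theorem w_one : w γ 1 = (2 - γ - γ ^ 2) / 2 := by simp [w]; ring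

@[simp] theorem w_two : w γ 2 = γ / 4 * (γ ^ 2 + γ - 4) := by simp [w, gcoef_two]; ring

variable {γ}

theorem hasSum_w_of_hasSum_gcoef (h : HasSum (gcoef γ) 0) : HasSum (w γ) 0 := by
  have htail := (((hasSum_nat_add_iff' 1).mpr h).mul_left (γ / 2)).add (h.mul_left ((2 - γ) / 2))
  rw [← hasSum_nat_add_iff' 1, sum_range_one, w_zero]
  rwa [sum_range_one, gcoef_zero, mul_zero, add_zero, zero_sub, mul_neg_one, ← zero_sub] at htail

theorem w_nonneg (h₁ : 1 ≤ γ) (h₂ : γ ≤ 2) {k : ℕ} (hk : 3 ≤ k) : 0 ≤ w γ k := by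
  obtain ⟨k, rfl⟩ : ∃ j, k = j + 1 := ⟨k - 1, by omega⟩
  have := gcoef_nonneg h₁ h₂ (k := k + 1) (by omega)
  have := gcoef_nonneg h₁ h₂ (k := k) (by omega)
  simp only [w]
  nlinarith

end w

/-- The WSGD weights are absolutely summable with explicit absolute sum
`γ² + γ - 2 + (γ/4)(|γ²+γ-4| - (γ²+γ-4))`; in particular the defining series of
`f_γ(ξ) = -∑_{k=-1}^∞ w_{k+1}^{(γ)} e^{ikξ}` converges absolutely (uniformly in `ξ`),
i.e. `f_γ` belongs to the Wiener class. -/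
theorem wsgd_weights_abs_sum (γ : ℝ) (hγ1 : 1 < γ) (hγ2 : γ < 2) :
    HasSum (fun k : ℕ => |w γ k|)
      (γ ^ 2 + γ - 2 + γ / 4 * (|γ ^ 2 + γ - 4| - (γ ^ 2 + γ - 4))) ∧
    ∀ ξ : ℝ, Summable (fun k : ℕ =>
      ‖(w γ k : ℂ) * Complex.exp (Complex.I * ((k : ℂ) - 1) * (ξ : ℂ))‖) := by
  have habs := (hasSum_w_of_hasSum_gcoef (hasSum_gcoef hγ1.le hγ2.le)).abs_of_nonneg_from 3
    fun k hk ↦ w_nonneg hγ1.le hγ2.le hk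
  have hvalue : (0 : ℝ) + ∑ i ∈ range 3, (|w γ i| - w γ i) =
      γ ^ 2 + γ - 2 + γ / 4 * (|γ ^ 2 + γ - 4| - (γ ^ 2 + γ - 4)) := by
    have hw1 : w γ 1 ≤ 0 := by rw [w_one]; nlinarith
    simp only [sum_range_succ, range_zero, sum_empty, w_zero, w_two, abs_of_nonpos hw1, abs_mul,
      abs_of_pos (by linarith : (0 : ℝ) < γ / 2), abs_of_pos (by linarith : (0 : ℝ) < γ / 4)]
    rw [w_one]
    ring
  refine ⟨hvalue ▸ habs, fun ξ ↦ habs.summable.congr fun k ↦ ?_⟩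
  simp [Complex.norm_exp]
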